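/- Let G = (V,E) be a finite graph with n(G) vertices that contains at least one cycle, and let C(G) = C(G,x,y,z) be its covered components polynomial. Then the girth g(G) of G (the minimum cardinality of an edge subset inducing a cycle) equals the minimum j such that the coefficient of x^{n(G)−j+1} y^{j} z^{1} in C(G) is positive, and the number #g(G) of edge subsets inducing a cycle of length g(G) equals the coefficient of x^{n(G)−g(G)+1} y^{g(G)} z^{1} in C(G). -/

import Mathlib

open MvPolynomial Finset
open scoped Classical

noncomputable section

variable {V : Type}

/-- The (finite) edge set of a simple graph on a finite vertex type, as a `Finset`. -/
def edgeFinset' [Fintype V] (G : SimpleGraph V) : Finset (Sym2 V) :=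
  (Set.toFinite G.edgeSet).toFinset

/-- `k(G)`: the number of connected components of `G`. -/
def kG (G : SimpleGraph V) : ℕ := Nat.card G.ConnectedComponent

/-- `c(G)`: the number of covered components of `G`, i.e. connected components
containing at least one edge. -/
def cG (G : SimpleGraph V) : ℕ :=
  Nat.card {c : G.ConnectedComponent // ∃ v w, G.Adj v w ∧ G.connectedComponentMk v = c}

/-- The covered components polynomial
`C(G,x,y,z) = ∑_{A ⊆ E} x^{k(⟨A⟩)} y^{|A|} z^{c(⟨A⟩)}` of a finite simple graph, where
`⟨A⟩` denotes the spanning subgraph with edge set `A`, and `x = X 0`, `y = X 1`,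
`z = X 2`. -/
def ccp [Fintype V] (G : SimpleGraph V) : MvPolynomial (Fin 3) ℤ :=
  ∑ A ∈ (edgeFinset' G).powerset,
    X 0 ^ kG (SimpleGraph.fromEdgeSet (A : Set (Sym2 V))) * X 1 ^ A.card *
      X 2 ^ cG (SimpleGraph.fromEdgeSet (A : Set (Sym2 V)))

/-- `[x^i y^j z^k] P`: the coefficient of the monomial `x^i y^j z^k`. -/
def coeff3 (P : MvPolynomial (Fin 3) ℤ) (i j k : ℕ) : ℤ :=
  MvPolynomial.coeff (Finsupp.single 0 i + Finsupp.single 1 j + Finsupp.single 2 k) P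

/-- The edge subset `A` induces a cycle: `A` is the edge set of some cycle of `G`. -/
def inducesCycle (G : SimpleGraph V) (A : Finset (Sym2 V)) : Prop :=
  ∃ (v : V) (w : G.Walk v v), w.IsCycle ∧ w.edges.toFinset = A

/-- `g(G)`: the girth of `G`, the minimum cardinality of an edge subset inducing a
cycle. -/
def girth' (G : SimpleGraph V) : ℕ :=
  sInf {j | ∃ A : Finset (Sym2 V), inducesCycle G A ∧ A.card = j}

/-- `#g(G)`: the number of edge subsets inducing a cycle of length `g(G)`. -/
def numGirthCycles [Fintype V] (G : SimpleGraph V) : ℕ :=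
  ((edgeFinset' G).powerset.filter (fun A => inducesCycle G A ∧ A.card = girth' G)).card

/-! Adding an edge to a graph lowers its number of components by one if the edge joins two
components and leaves it unchanged otherwise. Hence `k(⟨A⟩) + |A| = n` when `⟨A⟩` is a forest
and `k(⟨A⟩) + |A| = n + 1` when `A` is a cycle, which moreover spans a single covered
component. An edge set counted by the coefficient of `x^{n-j+1} y^j z` is therefore not a
forest and contains a cycle, which for `j ≤ g(G)` must be the whole set. -/

namespace SimpleGraph

variable {H : SimpleGraph V} {a b : V}

lemma Reachable.of_sup_edge {u v : V} (huv : (H ⊔ edge a b).Reachable u v) :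
    H.Reachable u v ∨ (H.Reachable u a ∧ H.Reachable b v) ∨
      (H.Reachable u b ∧ H.Reachable a v) := by
  obtain ⟨w⟩ := huv
  induction w with
  | nil => exact Or.inl .rfl
  | cons hadj _ ih =>
    rw [sup_adj, edge_adj] at hadj
    rcases hadj with hadj | ⟨⟨rfl, rfl⟩ | ⟨rfl, rfl⟩, -⟩
    · have := hadj.reachable
      grind [Reachable.trans]
    · grind [Reachable.refl]
    · grind [Reachable.refl]

namespace ConnectedComponent

lemma eq_or_of_map_sup_edge_eq {c c' : H.ConnectedComponent}
    (h : c.map (Hom.ofLE le_sup_left : H →g H ⊔ edge a b) = c'.map (Hom.ofLE le_sup_left)) :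
    c = c' ∨ (c = H.connectedComponentMk a ∧ c' = H.connectedComponentMk b) ∨
      (c = H.connectedComponentMk b ∧ c' = H.connectedComponentMk a) := by
  induction c using ConnectedComponent.ind
  induction c' using ConnectedComponent.ind
  simp only [map_mk, Hom.coe_ofLE, id, ConnectedComponent.eq] at h ⊢
  rcases h.of_sup_edge with h | ⟨h₁, h₂⟩ | ⟨h₁, h₂⟩
  · exact Or.inl h
  · exact Or.inr (Or.inl ⟨h₁, h₂.symm⟩)
  · exact Or.inr (Or.inr ⟨h₁, h₂.symm⟩)

end ConnectedComponent

lemma card_connectedComponent_sup_edge_of_reachable (hab : H.Reachable a b) :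
    Nat.card (H ⊔ edge a b).ConnectedComponent = Nat.card H.ConnectedComponent := by
  refine (Nat.card_eq_of_bijective _
    ⟨fun c c' h => ?_, ConnectedComponent.surjective_map_ofLE le_sup_left⟩).symm
  rcases ConnectedComponent.eq_or_of_map_sup_edge_eq h with h | ⟨rfl, rfl⟩ | ⟨rfl, rfl⟩
  · exact h
  · exact ConnectedComponent.sound hab
  · exact ConnectedComponent.sound hab.symm

lemma card_connectedComponent_sup_edge_add_one [Finite V] (hab : ¬ H.Reachable a b) :
    Nat.card (H ⊔ edge a b).ConnectedComponent + 1 = Nat.card H.ConnectedComponent := by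
  set φ : H.ConnectedComponent → (H ⊔ edge a b).ConnectedComponent :=
    ConnectedComponent.map (Hom.ofLE le_sup_left)
  have hne : H.connectedComponentMk a ≠ H.connectedComponentMk b :=
    fun h => hab (ConnectedComponent.exact h)
  have hφ : Function.Bijective fun c : {c // c ≠ H.connectedComponentMk b} => φ c := by
    refine ⟨fun c c' h => Subtype.ext ?_, fun d => ?_⟩
    · rcases ConnectedComponent.eq_or_of_map_sup_edge_eq h with h | ⟨-, h⟩ | ⟨h, -⟩
      exacts [h, absurd h c'.2, absurd h c.2]
    · obtain ⟨c, rfl⟩ := ConnectedComponent.surjective_map_ofLE le_sup_left d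
      by_cases hc : c = H.connectedComponentMk b
      · refine ⟨⟨_, hne⟩, ?_⟩
        rw [hc]
        exact ConnectedComponent.sound
          (Adj.reachable (by simp [edge_adj, ne_of_apply_ne _ hne]))
      · exact ⟨⟨c, hc⟩, rfl⟩
  rw [← Nat.card_eq_of_bijective _ hφ, ← Finite.card_option,
    Nat.card_congr (Equiv.optionSubtypeNe _)]

lemma fromEdgeSet_insert_mk (s : Set (Sym2 V)) (a b : V) :
    fromEdgeSet (insert s(a, b) s) = fromEdgeSet s ⊔ edge a b := by
  rw [Set.insert_eq, fromEdgeSet_union, sup_comm]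
  rfl

lemma card_connectedComponent_bot :
    Nat.card (⊥ : SimpleGraph V).ConnectedComponent = Nat.card V :=
  (Nat.card_eq_of_bijective _ ⟨fun _ _ h => reachable_bot.1 (ConnectedComponent.exact h),
    fun c => c.ind fun v => ⟨v, rfl⟩⟩).symm

theorem IsAcyclic.card_connectedComponent_fromEdgeSet_add_card [Fintype V]
    {A : Finset (Sym2 V)} (hA : ∀ e ∈ A, ¬ e.IsDiag)
    (hacyc : (fromEdgeSet (A : Set (Sym2 V))).IsAcyclic) :
    Nat.card (fromEdgeSet (A : Set (Sym2 V))).ConnectedComponent + #A = Fintype.card V := by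
  induction A using Finset.induction_on with
  | empty =>
    rw [coe_empty, fromEdgeSet_empty, card_connectedComponent_bot, card_empty, add_zero,
      Nat.card_eq_fintype_card]
  | insert e A he ih =>
    induction e using Sym2.ind with | _ a b =>
    have hab : a ≠ b := fun h => hA _ (mem_insert_self _ _) (Sym2.mk_isDiag_iff.2 h)
    rw [coe_insert, fromEdgeSet_insert_mk] at hacyc ⊢
    have hnr : ¬ (fromEdgeSet (A : Set (Sym2 V))).Reachable a b := by
      intro hr
      rcases (isAcyclic_sup_fromEdgeSet_iff.1 hacyc).2 hr with h | h
      exacts [hab h, he ((fromEdgeSet_adj _).1 h).1]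
    have hk := card_connectedComponent_sup_edge_add_one hnr
    have hA' := ih (fun e he => hA e (mem_insert_of_mem he)) (hacyc.anti le_sup_left)
    rw [card_insert_of_notMem he]
    omega

namespace Walk

variable {G : SimpleGraph V}

lemma reachable_fromEdgeSet {u v : V} (p : G.Walk u v) {s : Set (Sym2 V)}
    (hs : ∀ e ∈ p.edges, e ∈ s) : (fromEdgeSet s).Reachable u v :=
  (p.transfer _ fun e he => by
    rw [edgeSet_fromEdgeSet]
    exact ⟨hs e he, G.not_isDiag_of_mem_edgeSet (p.edges_subset_edgeSet he)⟩).reachable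

lemma IsPath.isAcyclic_fromEdgeSet {u v : V} {p : G.Walk u v} (hp : p.IsPath) :
    (fromEdgeSet (p.edges.toFinset : Set (Sym2 V))).IsAcyclic := by
  induction p with
  | nil => simp
  | @cons u x v h p ih =>
    rw [cons_isPath_iff] at hp
    rw [edges_cons, List.toFinset_cons, coe_insert, fromEdgeSet_insert_mk]
    refine (ih hp.1).sup_edge_of_not_reachable fun ⟨q⟩ => ?_
    cases q with
    | nil => exact h.ne rfl
    | cons hadj _ =>
      rw [fromEdgeSet_adj, mem_coe, List.mem_toFinset] at hadj
      exact hp.2 (p.fst_mem_support_of_mem_edges hadj.1)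

theorem IsCycle.card_connectedComponent_fromEdgeSet_add_card [Fintype V] {v : V}
    {c : G.Walk v v} (hc : c.IsCycle) :
    Nat.card (fromEdgeSet (c.edges.toFinset : Set (Sym2 V))).ConnectedComponent +
      #c.edges.toFinset = Fintype.card V + 1 := by
  cases c with
  | nil => exact absurd rfl hc.ne_nil
  | @cons v x _ h p =>
    rw [cons_isCycle_iff] at hc
    have hnotMem : s(v, x) ∉ p.edges.toFinset := by simpa using hc.2
    have hpath := IsAcyclic.card_connectedComponent_fromEdgeSet_add_card
      (fun e he => G.not_isDiag_of_mem_edgeSet (p.edges_subset_edgeSet (List.mem_toFinset.1 he)))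
      hc.1.isAcyclic_fromEdgeSet
    have hvx := (p.reachable_fromEdgeSet (s := (p.edges.toFinset : Set (Sym2 V)))
      fun e he => by simpa using he).symm
    rw [edges_cons, List.toFinset_cons, card_insert_of_notMem hnotMem, coe_insert,
      fromEdgeSet_insert_mk, card_connectedComponent_sup_edge_of_reachable hvx]
    omega

lemma cG_fromEdgeSet {u v : V} (p : G.Walk u v) (hp : ¬ p.Nil) :
    cG (fromEdgeSet (p.edges.toFinset : Set (Sym2 V))) = 1 := by
  set H := fromEdgeSet (p.edges.toFinset : Set (Sym2 V))
  have hreach : ∀ w ∈ p.support, H.Reachable u w := fun w hw =>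
    (p.takeUntil w hw).reachable_fromEdgeSet fun e he => by
      simpa using p.edges_takeUntil_subset_edges hw he
  rw [cG, Nat.card_eq_one_iff_unique]
  refine ⟨⟨?_⟩, ?_⟩
  · have hmem : ∀ {w w'}, H.Adj w w' → w ∈ p.support := fun h =>
      p.fst_mem_support_of_mem_edges (by simpa [H] using h.1)
    rintro ⟨_, w, -, hww', rfl⟩ ⟨_, y, -, hyy', rfl⟩
    refine Subtype.ext (ConnectedComponent.sound ?_)
    exact (hreach w (hmem hww')).symm.trans (hreach y (hmem hyy'))
  · cases p with
    | nil => exact absurd Walk.Nil.nil hp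
    | @cons u x _ h q =>
      exact ⟨⟨_, u, x, by simp [H, fromEdgeSet_adj, h.ne], rfl⟩⟩

end Walk

end SimpleGraph

open SimpleGraph

lemma mem_edgeFinset' [Fintype V] {G : SimpleGraph V} {e : Sym2 V} :
    e ∈ edgeFinset' G ↔ e ∈ G.edgeSet :=
  Set.Finite.mem_toFinset _

lemma coeff3_ccp [Fintype V] (G : SimpleGraph V) (i j k : ℕ) :
    coeff3 (ccp G) i j k = #((edgeFinset' G).powerset.filter fun A : Finset (Sym2 V) =>
      kG (fromEdgeSet (A : Set (Sym2 V))) = i ∧ #A = j ∧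
        cG (fromEdgeSet (A : Set (Sym2 V))) = k) := by
  have hmonomial (a b c : ℕ) : (X 0 ^ a * X 1 ^ b * X 2 ^ c : MvPolynomial (Fin 3) ℤ) =
      monomial (Finsupp.single 0 a + Finsupp.single 1 b + Finsupp.single 2 c) 1 := by
    simp [X_pow_eq_monomial, monomial_mul]
  have hexponent (a b c : ℕ) :
      Finsupp.single (0 : Fin 3) a + Finsupp.single 1 b + Finsupp.single 2 c =
        Finsupp.single 0 i + Finsupp.single 1 j + Finsupp.single 2 k ↔ a = i ∧ b = j ∧ c = k := by
    simp [Finsupp.ext_iff, Fin.forall_fin_succ, Finsupp.single_apply]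
  simp only [coeff3, ccp, coeff_sum, hmonomial, coeff_monomial, hexponent, sum_boole]

lemma exists_inducesCycle_subset_of_not_isAcyclic {G : SimpleGraph V} {A : Finset (Sym2 V)}
    (hAG : (A : Set (Sym2 V)) ⊆ G.edgeSet) (hA : ¬ (fromEdgeSet (A : Set (Sym2 V))).IsAcyclic) :
    ∃ B ⊆ A, inducesCycle G B := by
  obtain ⟨v, c, hc⟩ : ∃ v, ∃ c : (fromEdgeSet (A : Set (Sym2 V))).Walk v v, c.IsCycle := by
    simpa [IsAcyclic] using hA
  have hle : fromEdgeSet (A : Set (Sym2 V)) ≤ G := fun _ _ h => hAG ((fromEdgeSet_adj _).1 h).1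
  refine ⟨_, fun e he => ?_, v, c.mapLe hle, (Walk.isCycle_mapLe hle).2 hc, rfl⟩
  rw [List.mem_toFinset, Walk.edges_mapLe_eq_edges] at he
  have := c.edges_subset_edgeSet he
  rw [edgeSet_fromEdgeSet] at this
  exact this.1

namespace inducesCycle

variable {G : SimpleGraph V} {A : Finset (Sym2 V)}

lemma subset_edgeFinset' [Fintype V] (hA : inducesCycle G A) : A ⊆ edgeFinset' G := by
  obtain ⟨v, c, -, rfl⟩ := hA
  intro e he
  exact mem_edgeFinset'.2 (c.edges_subset_edgeSet (List.mem_toFinset.1 he))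

lemma kG_add_card [Fintype V] (hA : inducesCycle G A) :
    kG (fromEdgeSet (A : Set (Sym2 V))) + #A = Fintype.card V + 1 := by
  obtain ⟨v, c, hc, rfl⟩ := hA
  exact hc.card_connectedComponent_fromEdgeSet_add_card

lemma kG_pos [Fintype V] (hA : inducesCycle G A) : 0 < kG (fromEdgeSet (A : Set (Sym2 V))) := by
  obtain ⟨v, -⟩ := hA
  have : Nonempty (fromEdgeSet (A : Set (Sym2 V))).ConnectedComponent :=
    ⟨connectedComponentMk _ v⟩
  exact Nat.card_pos

lemma cG_eq_one (hA : inducesCycle G A) : cG (fromEdgeSet (A : Set (Sym2 V))) = 1 := by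
  obtain ⟨v, c, hc, rfl⟩ := hA
  exact c.cG_fromEdgeSet hc.not_nil

lemma girth'_le_card (hA : inducesCycle G A) : girth' G ≤ #A :=
  Nat.sInf_le ⟨A, hA, rfl⟩

end inducesCycle

lemma exists_inducesCycle_card_eq_girth' {G : SimpleGraph V} (h : ∃ A, inducesCycle G A) :
    ∃ A, inducesCycle G A ∧ #A = girth' G := by
  obtain ⟨A, hA⟩ := h
  exact Nat.sInf_mem (s := {j | ∃ B : Finset (Sym2 V), inducesCycle G B ∧ #B = j})
    ⟨_, A, hA, rfl⟩

theorem inducesCycle_iff_of_card_le_girth' [Fintype V] {G : SimpleGraph V} {A : Finset (Sym2 V)}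
    (hAG : A ⊆ edgeFinset' G) (hA : #A ≤ girth' G) :
    inducesCycle G A ↔
      kG (fromEdgeSet (A : Set (Sym2 V))) + #A = Fintype.card V + 1 ∧
        cG (fromEdgeSet (A : Set (Sym2 V))) = 1 := by
  refine ⟨fun h => ⟨h.kG_add_card, h.cG_eq_one⟩, fun ⟨hk, _⟩ => ?_⟩
  have hAG' : (A : Set (Sym2 V)) ⊆ G.edgeSet := fun e he => mem_edgeFinset'.1 (hAG he)
  have hnac : ¬ (fromEdgeSet (A : Set (Sym2 V))).IsAcyclic := fun hac => by
    have := hac.card_connectedComponent_fromEdgeSet_add_card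
      fun e he => G.not_isDiag_of_mem_edgeSet (hAG' he)
    rw [kG] at hk
    omega
  obtain ⟨B, hBA, hB⟩ := exists_inducesCycle_subset_of_not_isAcyclic hAG' hnac
  rwa [← eq_of_subset_of_card_le hBA (hA.trans hB.girth'_le_card)]

/-- Let `G` be a finite graph on `n(G)` vertices containing at least
one cycle.  Then the girth `g(G)` is the minimum `j` such that the coefficient of
`x^{n(G)−j+1} y^j z^1` in `C(G)` is positive, and `#g(G)` equals the coefficient of
`x^{n(G)−g(G)+1} y^{g(G)} z^1` in `C(G)`. -/
theorem ccp_girth {V : Type} [Fintype V] (G : SimpleGraph V)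
    (h : ∃ A : Finset (Sym2 V), inducesCycle G A) :
    girth' G =
      sInf {j | ∃ i, i + j = Fintype.card V + 1 ∧ 0 < coeff3 (ccp G) i j 1} ∧
    (numGirthCycles G : ℤ) =
      coeff3 (ccp G) (Fintype.card V - girth' G + 1) (girth' G) 1 := by
  obtain ⟨A₀, hA₀, hA₀g⟩ := exists_inducesCycle_card_eq_girth' h
  have hk₀ := hA₀.kG_add_card
  have hk₀pos := hA₀.kG_pos
  constructor
  · refine (IsLeast.csInf_eq ⟨?_, ?_⟩).symm
    · refine ⟨_, hA₀g ▸ hk₀, ?_⟩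
      rw [coeff3_ccp, Nat.cast_pos, card_pos]
      exact ⟨A₀, by simp [hA₀.subset_edgeFinset', hA₀g, hA₀.cG_eq_one]⟩
    · rintro j ⟨i, hij, hpos⟩
      rw [coeff3_ccp, Nat.cast_pos, card_pos] at hpos
      obtain ⟨A, hA⟩ := hpos
      rw [mem_filter, mem_powerset] at hA
      obtain ⟨hAG, rfl, rfl, hc⟩ := hA
      by_contra! hlt
      have hcyc := (inducesCycle_iff_of_card_le_girth' hAG hlt.le).2 ⟨hij, hc⟩
      exact hlt.not_ge hcyc.girth'_le_card
  · rw [numGirthCycles, coeff3_ccp]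
    congr 2
    refine filter_congr fun A hA => ?_
    by_cases hcard : #A = girth' G
    · rw [inducesCycle_iff_of_card_le_girth' (mem_powerset.1 hA) hcard.le]
      constructor <;> rintro ⟨h₁, h₂⟩ <;> omega
    · simp [hcard]

end
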